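/- arXiv:1605.07570 — 4 statements merged into one kernel-verified Lean document; each statement's English description precedes it below -/
import Mathlib

section
/- Let 0 < δ < 1/2 be a constant. There is a constant C such that for all n ≥ 2 and all m with δn² ≤ m ≤ (1−δ)n², writing p_m = m/n², one has | log( (m)_n / (n²)_n ) − n log p_m + (1 − p_m)/(2 p_m) | ≤ C/n. That is, (m)_n / (n²)_n = p_m^n · exp( −(1 − p_m)/(2 p_m) + O(1/n) ). -/
/-!
Write `log (a)_n = n log a + ∑_{i<n} log (1 - i/a)`. Since `log (1 - x) = -x + O(x²)`, the sum is
`-n(n-1)/(2a) + O(n³/a²)`, which is `O(1/n)` both for `a = n²` and for `a = m ≥ δ n²`. The terms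
`n log a` combine to `n log p_m`, and the two linear terms leave `-(1 - p_m)/(2 p_m)` up to
`n/(2m) - 1/(2n) = O(1/n)`. This needs `m ≥ 2n`, which holds once `n ≥ 2/δ`; the finitely many
remaining pairs `(n, m)` are absorbed into the constant.
-/

open Real Finset

lemma abs_log_one_sub_add_le {x : ℝ} (hx₀ : 0 ≤ x) (hx₁ : x ≤ 1 / 2) :
    |log (1 - x) + x| ≤ 2 * x ^ 2 := by
  have h := abs_log_sub_add_sum_range_le (x := x) (by rw [abs_of_nonneg hx₀]; linarith) 1
  rw [abs_of_nonneg hx₀] at h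
  simp only [range_one, sum_singleton, zero_add, pow_one, Nat.cast_zero, div_one] at h
  rw [add_comm]
  calc _ ≤ x ^ 2 / (1 - x) := h
    _ ≤ 2 * x ^ 2 := by rw [div_le_iff₀ (by linarith)]; nlinarith

lemma cast_descFactorial_eq_prod_range {m n : ℕ} (h : n ≤ m) :
    (m.descFactorial n : ℝ) = ∏ i ∈ range n, ((m : ℝ) - i) := by
  rw [Nat.descFactorial_eq_prod_range, Nat.cast_prod]
  exact prod_congr rfl fun i hi => Nat.cast_sub (by have := mem_range.mp hi; omega)

lemma log_descFactorial {m n : ℕ} (h : n ≤ m) (hm : 0 < m) :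
    log (m.descFactorial n) = n * log m + ∑ i ∈ range n, log (1 - i / m) := by
  have hfactor : ∀ i ∈ range n, (0 : ℝ) < 1 - i / m := fun i hi => by
    rw [sub_pos, div_lt_one (by positivity)]; exact_mod_cast (mem_range.mp hi).trans_le h
  have hprod : ∏ i ∈ range n, ((m : ℝ) - i) = m ^ n * ∏ i ∈ range n, (1 - (i : ℝ) / m) := by
    rw [← card_range n, ← prod_const, card_range, ← prod_mul_distrib]
    exact prod_congr rfl fun i _ => by field_simp
  rw [cast_descFactorial_eq_prod_range h, hprod,
    log_mul (by positivity) (prod_pos hfactor).ne', log_pow, log_prod fun i hi => (hfactor i hi).ne']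

lemma cast_sum_range_id (n : ℕ) : ∑ i ∈ range n, (i : ℝ) = n * (n - 1) / 2 := by
  have h := congrArg (Nat.cast : ℕ → ℝ) (sum_range_id_mul_two n)
  rcases n with _ | n
  · simp
  push_cast at h ⊢
  linarith

lemma abs_sum_log_one_sub_div_add_le {a : ℝ} {n : ℕ} (ha : 2 * n ≤ a) (ha₀ : 0 < a) :
    |∑ i ∈ range n, log (1 - i / a) + n * (n - 1) / (2 * a)| ≤ 2 * n ^ 3 / a ^ 2 := by
  have hlin : n * (n - 1) / (2 * a) = ∑ i ∈ range n, (i : ℝ) / a := by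
    rw [← sum_div, cast_sum_range_id]; ring
  rw [hlin, ← sum_add_distrib]
  calc _ ≤ ∑ i ∈ range n, |log (1 - i / a) + i / a| := abs_sum_le_sum_abs _ _
    _ ≤ ∑ i ∈ range n, 2 * ((n : ℝ) / a) ^ 2 := by
      refine sum_le_sum fun i hi => ?_
      have hi : (i : ℝ) ≤ n := by exact_mod_cast (mem_range.mp hi).le
      have hx₁ : (i : ℝ) / a ≤ 1 / 2 := by rw [div_le_iff₀ ha₀]; linarith
      calc _ ≤ 2 * ((i : ℝ) / a) ^ 2 := abs_log_one_sub_add_le (by positivity) hx₁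
        _ ≤ 2 * ((n : ℝ) / a) ^ 2 := by gcongr
    _ = 2 * n ^ 3 / a ^ 2 := by rw [sum_const, card_range, nsmul_eq_mul]; ring

lemma log_descFactorial_ratio_sub_eq {n m : ℕ} (hn : 0 < n) (hnm : n ≤ m) :
    log ((m.descFactorial n : ℝ) / ((n ^ 2).descFactorial n : ℝ)) - n * log (m / (n : ℝ) ^ 2)
        + (1 - m / (n : ℝ) ^ 2) / (2 * (m / (n : ℝ) ^ 2))
      = (∑ i ∈ range n, log (1 - i / m) + n * (n - 1) / (2 * m))
        - (∑ i ∈ range n, log (1 - i / (n : ℝ) ^ 2) + n * (n - 1) / (2 * (n : ℝ) ^ 2))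
        + (n / (2 * m) - 1 / (2 * n)) := by
  have hm : 0 < m := hn.trans_le hnm
  have hdesc_pos : ∀ {a : ℕ}, n ≤ a → (0 : ℝ) < a.descFactorial n := fun h => by
    exact_mod_cast Nat.descFactorial_pos.mpr h
  have hn₀ : (n : ℝ) ≠ 0 := by positivity
  have hm₀ : (m : ℝ) ≠ 0 := by positivity
  have hnsq := log_descFactorial (Nat.le_self_pow two_ne_zero n) (by positivity)
  push_cast at hnsq
  rw [log_div (hdesc_pos hnm).ne' (hdesc_pos (Nat.le_self_pow two_ne_zero n)).ne',
    log_descFactorial hnm hm, hnsq, log_div hm₀ (by positivity)]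
  field_simp
  ring

lemma abs_log_descFactorial_ratio_sub_le {δ : ℝ} (hδ : 0 < δ) {n m : ℕ} (hn : 2 ≤ n)
    (hδn : 2 ≤ δ * n) (hm : δ * (n : ℝ) ^ 2 ≤ m) :
    |log ((m.descFactorial n : ℝ) / ((n ^ 2).descFactorial n : ℝ)) - n * log (m / (n : ℝ) ^ 2)
        + (1 - m / (n : ℝ) ^ 2) / (2 * (m / (n : ℝ) ^ 2))|
      ≤ (2 / δ ^ 2 + 1 / (2 * δ) + 5 / 2) / n := by
  have hn₂ : (2 : ℝ) ≤ n := by exact_mod_cast hn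
  have hn₀ : (0 : ℝ) < n := by linarith
  have h2n : 2 * (n : ℝ) ≤ m := by nlinarith
  have hm₀ : (0 : ℝ) < m := by linarith
  have hsplit : ∀ a b x y : ℝ, 0 ≤ x → 0 ≤ y → |a - b + (x - y)| ≤ |a| + |b| + (x + y) :=
    fun a b x y hx hy => by
      have := (abs_add_le (a - b) (x - y)).trans (add_le_add (abs_sub a b) (abs_sub x y))
      rwa [abs_of_nonneg hx, abs_of_nonneg hy] at this
  rw [log_descFactorial_ratio_sub_eq (by omega) (by exact_mod_cast (by linarith : (n : ℝ) ≤ m))]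
  calc _ ≤ _ := hsplit _ _ _ _ (by positivity) (by positivity)
    _ ≤ 2 / δ ^ 2 / n + 2 / n + (1 / (2 * δ) / n + 1 / (2 * n)) := by
      gcongr ?_ + ?_ + (?_ + _)
      · refine (abs_sum_log_one_sub_div_add_le h2n hm₀).trans ?_
        rw [div_div, div_le_div_iff₀ (by positivity) (by positivity)]
        nlinarith [mul_le_mul hm hm (by positivity) hm₀.le]
      · refine (abs_sum_log_one_sub_div_add_le (a := (n : ℝ) ^ 2) (by nlinarith)
          (by positivity)).trans_eq ?_
        field_simp
      · rw [div_div, div_le_div_iff₀ (by positivity) (by positivity)]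
        nlinarith
    _ = _ := by ring

lemma exists_forall_abs_le_div_of_lt (f : ℕ → ℕ → ℝ) (N M : ℕ) :
    ∃ C, ∀ n m, 0 < n → n < N → m < M → |f n m| ≤ C / n := by
  refine ⟨∑ p ∈ range N ×ˢ range M, p.1 * |f p.1 p.2|, fun n m hn hnN hmM => ?_⟩
  rw [le_div_iff₀ (by exact_mod_cast hn), mul_comm]
  exact single_le_sum (f := fun p : ℕ × ℕ => (p.1 : ℝ) * |f p.1 p.2|) (a := (n, m))
    (fun _ _ => by positivity) (mem_product.mpr ⟨mem_range.mpr hnN, mem_range.mpr hmM⟩)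

theorem descFactorial_ratio_estimate_general (δ : ℝ) (hδ0 : 0 < δ) :
    ∃ C : ℝ, ∀ n m : ℕ, 2 ≤ n →
      δ * (n : ℝ) ^ 2 ≤ (m : ℝ) → (m : ℝ) ≤ (1 - δ) * (n : ℝ) ^ 2 →
      |Real.log ((Nat.descFactorial m n : ℝ) / (Nat.descFactorial (n ^ 2) n : ℝ))
          - (n : ℝ) * Real.log ((m : ℝ) / (n : ℝ) ^ 2)
          + (1 - (m : ℝ) / (n : ℝ) ^ 2) / (2 * ((m : ℝ) / (n : ℝ) ^ 2))|
        ≤ C / n := by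
  set N := ⌈2 / δ⌉₊
  obtain ⟨C₀, hC₀⟩ := exists_forall_abs_le_div_of_lt (fun n m =>
    Real.log ((Nat.descFactorial m n : ℝ) / (Nat.descFactorial (n ^ 2) n : ℝ))
      - (n : ℝ) * Real.log ((m : ℝ) / (n : ℝ) ^ 2)
      + (1 - (m : ℝ) / (n : ℝ) ^ 2) / (2 * ((m : ℝ) / (n : ℝ) ^ 2))) N (N ^ 2)
  refine ⟨max C₀ (2 / δ ^ 2 + 1 / (2 * δ) + 5 / 2), fun n m hn hm₁ hm₂ => ?_⟩
  have hn₀ : 0 < n := by omega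
  rcases lt_or_ge n N with hsmall | hlarge
  · have hmn : (m : ℝ) < (n : ℝ) ^ 2 := by
      nlinarith [mul_pos hδ0 (pow_pos (show (0 : ℝ) < n by positivity) 2)]
    have hmN : m < N ^ 2 :=
      (by exact_mod_cast hmn : m < n ^ 2).trans_le (Nat.pow_le_pow_left hsmall.le 2)
    exact (hC₀ n m hn₀ hsmall hmN).trans (by gcongr; exact le_max_left _ _)
  · have hδn : 2 ≤ δ * n := by
      have := (Nat.ceil_le.mp hlarge); rwa [div_le_iff₀ hδ0, mul_comm] at this
    exact (abs_log_descFactorial_ratio_sub_le hδ0 hn hδn hm₁).trans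
      (by gcongr; exact le_max_right _ _)

/-- For `0 < δ < 1/2` there is a constant `C` such that for all `n ≥ 2` and all
`δ n² ≤ m ≤ (1-δ) n²`, writing `p_m = m/n²`,
`| log((m)_n / (n²)_n) - n log p_m + (1 - p_m)/(2 p_m) | ≤ C/n`; that is,
`(m)_n / (n²)_n = p_m^n exp(-(1-p_m)/(2p_m) + O(1/n))`. -/
theorem descFactorial_ratio_estimate (δ : ℝ) (hδ0 : 0 < δ) (hδ1 : δ < 1 / 2) :
    ∃ C : ℝ, ∀ n m : ℕ, 2 ≤ n →
      δ * (n : ℝ) ^ 2 ≤ (m : ℝ) → (m : ℝ) ≤ (1 - δ) * (n : ℝ) ^ 2 →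
      |Real.log ((Nat.descFactorial m n : ℝ) / (Nat.descFactorial (n ^ 2) n : ℝ))
          - (n : ℝ) * Real.log ((m : ℝ) / (n : ℝ) ^ 2)
          + (1 - (m : ℝ) / (n : ℝ) ^ 2) / (2 * ((m : ℝ) / (n : ℝ) ^ 2))|
        ≤ C / n :=
  descFactorial_ratio_estimate_general δ hδ0
end

section
/- Let n ≥ 1 and k ≥ 2 be natural numbers and let ℓ_2, …, ℓ_k be nonnegative integers. The number N_L of ordered k-tuples (σ_1,…,σ_k) of permutations of [n] such that for every 2 ≤ t ≤ k the graph of σ_t meets the union of the graphs of σ_1,…,σ_{t−1} in exactly ℓ_t edges (i.e. |graph(σ_t) ∩ ∪_{j<t} graph(σ_j)| = ℓ_t) satisfies N_L ≤ (n!)^k · Π_{t=2}^k (t−1)^{ℓ_t} / ℓ_t!. -/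
/-- The graph of a permutation `σ` of `[n]`: the set `{(i, σ i) : i ∈ [n]}`. -/
def permGraph (n : ℕ) (σ : Equiv.Perm (Fin n)) : Finset (Fin n × Fin n) :=
  Finset.univ.image (fun i => (i, σ i))

/-!
Choose the permutations one at a time. The union `S` of the graphs of `σ_1, …, σ_{t-1}` has
at most `t - 1` cells in each row. A permutation whose graph meets `S` in exactly `ℓ` cells is
determined by the set of those `ℓ` rows, its values there and a bijection between the remaining
rows and columns, which leaves at most `C(n, ℓ) (t - 1)^ℓ (n - ℓ)! ≤ n! (t - 1)^ℓ / ℓ!` choices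
for `σ_t`.
-/

open Finset
open scoped Nat

section Perm

variable {α : Type*} [Fintype α] [DecidableEq α]

theorem card_perm_fixing_le (A : Finset α) :
    #{σ : Equiv.Perm α | ∀ i ∈ A, σ i = i} ≤ (Fintype.card α - #A)! := by
  calc #{σ : Equiv.Perm α | ∀ i ∈ A, σ i = i}
      ≤ #(univ.image (Equiv.Perm.ofSubtype : Equiv.Perm {x // x ∉ A} → Equiv.Perm α)) := by
        refine card_le_card fun σ hσ => ?_
        obtain ⟨τ, hτ⟩ := (Equiv.Perm.mem_range_ofSubtype_iff (p := (· ∉ A))).2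
          fun x hx hxA => Equiv.Perm.mem_support.1 hx ((mem_filter.1 hσ).2 x hxA)
        exact mem_image.2 ⟨τ, mem_univ _, hτ⟩
    _ ≤ _ := card_image_le
    _ = _ := by
      rw [Finset.card_univ, Fintype.card_perm, Fintype.card_subtype_compl, Fintype.card_coe]

theorem card_perm_eq_on_le (A : Finset α) (v : α → α) :
    #{σ : Equiv.Perm α | ∀ i ∈ A, σ i = v i} ≤ (Fintype.card α - #A)! := by
  obtain h | ⟨σ₀, hσ₀⟩ :=
    (filter (fun σ : Equiv.Perm α => ∀ i ∈ A, σ i = v i) univ).eq_empty_or_nonempty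
  · simp [h]
  refine le_trans (card_le_card_of_injOn (σ₀⁻¹ * ·) (fun σ hσ => ?_)
    (mul_right_injective _).injOn) (card_perm_fixing_le A)
  simp only [coe_filter, mem_filter, mem_univ, true_and, Set.mem_ofPred_eq] at hσ hσ₀ ⊢
  intro i hi
  rw [Equiv.Perm.mul_apply, hσ i hi, ← hσ₀ i hi, Equiv.Perm.coe_inv, Equiv.symm_apply_apply]

theorem card_perm_mem_on_le (A : Finset α) (F : α → Finset α) :
    #{σ : Equiv.Perm α | ∀ i ∈ A, σ i ∈ F i} ≤ (∏ i ∈ A, #(F i)) * (Fintype.card α - #A)! := by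
  have hfiber (g : A → α) :
      #{σ ∈ {σ : Equiv.Perm α | ∀ i ∈ A, σ i ∈ F i} | (fun i : A => σ i) = g}
        ≤ (Fintype.card α - #A)! := by
    refine le_trans (card_le_card fun σ hσ => ?_)
      (card_perm_eq_on_le A fun j => if h : j ∈ A then g ⟨j, h⟩ else j)
    simp only [mem_filter, mem_univ, true_and] at hσ ⊢
    intro i hi
    rw [dif_pos hi, ← hσ.2]
  have h := card_le_mul_card_image_of_maps_to (f := fun (σ : Equiv.Perm α) (i : A) => σ i)
    (t := Fintype.piFinset fun i : A => F i)
    (fun σ hσ => Fintype.mem_piFinset.2 fun i => by exact (mem_filter.1 hσ).2 i i.2) _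
    fun g _ => hfiber g
  rwa [Fintype.card_piFinset, prod_coe_sort A fun i => #(F i), mul_comm] at h

theorem card_perm_graph_meets_le (S : Finset (α × α)) {m : ℕ} (hS : ∀ i, #{j | (i, j) ∈ S} ≤ m)
    (ℓ : ℕ) :
    #{σ : Equiv.Perm α | #{i | (i, σ i) ∈ S} = ℓ}
      ≤ (Fintype.card α).choose ℓ * (m ^ ℓ * (Fintype.card α - ℓ)!) := by
  have hfiber (A : Finset α) (hA : A ∈ powersetCard ℓ univ) :
      #{σ ∈ {σ : Equiv.Perm α | #{i | (i, σ i) ∈ S} = ℓ} | ({i | (i, σ i) ∈ S} : Finset α) = A}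
        ≤ m ^ ℓ * (Fintype.card α - ℓ)! := by
    rw [(mem_powersetCard_univ.1 hA).symm]
    calc _ ≤ #{σ : Equiv.Perm α | ∀ i ∈ A, σ i ∈ ({j | (i, j) ∈ S} : Finset α)} :=
          card_le_card fun σ hσ => by
            simp only [mem_filter, mem_univ, true_and] at hσ ⊢
            intro i hi
            simpa [← hσ.2] using hi
      _ ≤ (∏ i ∈ A, #{j | (i, j) ∈ S}) * (Fintype.card α - #A)! := card_perm_mem_on_le _ _
      _ ≤ m ^ #A * (Fintype.card α - #A)! :=
          Nat.mul_le_mul_right _ (prod_le_pow_card _ _ _ fun i _ => hS i)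
  have h := card_le_mul_card_image_of_maps_to
    (f := fun σ : Equiv.Perm α => ({i | (i, σ i) ∈ S} : Finset α))
    (fun σ hσ => mem_powersetCard_univ.2 (mem_filter.1 hσ).2) _ hfiber
  rwa [card_powersetCard, card_univ, mul_comm] at h

theorem factorial_mul_card_perm_graph_meets_le (S : Finset (α × α)) {m : ℕ}
    (hS : ∀ i, #{j | (i, j) ∈ S} ≤ m) (ℓ : ℕ) :
    ℓ ! * #{σ : Equiv.Perm α | #{i | (i, σ i) ∈ S} = ℓ} ≤ (Fintype.card α)! * m ^ ℓ := by
  refine (Nat.mul_le_mul_left _ (card_perm_graph_meets_le S hS ℓ)).trans ?_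
  obtain hℓ | hℓ := le_or_gt ℓ (Fintype.card α)
  · rw [← Nat.choose_mul_factorial_mul_factorial hℓ]
    apply le_of_eq
    ring
  · simp [Nat.choose_eq_zero_of_lt hℓ]

end Perm

section PermGraph

variable {n : ℕ}

theorem mem_permGraph {σ : Equiv.Perm (Fin n)} {i j : Fin n} :
    (i, j) ∈ permGraph n σ ↔ σ i = j := by
  simp [permGraph]

theorem card_permGraph_inter (σ : Equiv.Perm (Fin n)) (S : Finset (Fin n × Fin n)) :
    #(permGraph n σ ∩ S) = #{i | (i, σ i) ∈ S} := by
  rw [← filter_mem_eq_inter, permGraph, filter_image]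
  exact card_image_of_injective _ fun i j h => (Prod.ext_iff.1 h).1

theorem card_row_biUnion_permGraph_le {ι : Type*} (s : Finset ι) (τ : ι → Equiv.Perm (Fin n))
    (i : Fin n) : #{j | (i, j) ∈ s.biUnion fun t => permGraph n (τ t)} ≤ #s := by
  refine (card_le_card fun j hj => ?_).trans (card_image_le (f := fun t => τ t i))
  simp only [mem_filter, mem_univ, true_and, mem_biUnion, mem_permGraph] at hj
  exact mem_image.2 hj

end PermGraph

def tuplesWithIntersections (n k : ℕ) (ℓ : ℕ → ℕ) : Finset (Fin k → Equiv.Perm (Fin n)) :=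
  {σ | ∀ t : Fin k, 1 ≤ t.val →
    #(permGraph n (σ t) ∩ ({j | j < t} : Finset (Fin k)).biUnion fun j => permGraph n (σ j))
      = ℓ (t.val + 1)}

section TuplesWithIntersections

variable {n k : ℕ} {ℓ : ℕ → ℕ}

theorem init_mem_tuplesWithIntersections {σ : Fin (k + 1) → Equiv.Perm (Fin n)}
    (hσ : σ ∈ tuplesWithIntersections n (k + 1) ℓ) :
    Fin.init σ ∈ tuplesWithIntersections n k ℓ := by
  simp only [tuplesWithIntersections, mem_filter, mem_univ, true_and, filter_gt_eq_Iio] at hσ ⊢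
  intro t ht
  have h := hσ t.castSucc ht
  rw [Fin.Iio_castSucc, map_eq_image, image_biUnion] at h
  exact h

theorem card_fiber_init_tuplesWithIntersections_le (hk : 1 ≤ k) (τ : Fin k → Equiv.Perm (Fin n)) :
    #{σ ∈ tuplesWithIntersections n (k + 1) ℓ | Fin.init σ = τ}
      ≤ #{π : Equiv.Perm (Fin n) |
          #{i | (i, π i) ∈ univ.biUnion fun j => permGraph n (τ j)} = ℓ (k + 1)} := by
  refine card_le_card_of_injOn (· (Fin.last k)) (fun σ hσ => ?_) fun σ hσ σ' hσ' h => ?_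
  · simp only [coe_filter, tuplesWithIntersections, mem_filter, mem_univ, true_and,
      filter_gt_eq_Iio, Set.mem_ofPred_eq] at hσ ⊢
    have hlast := hσ.1 (Fin.last k) hk
    rw [Fin.Iio_last_eq_map, map_eq_image, image_biUnion, card_permGraph_inter] at hlast
    rw [← hσ.2]
    exact hlast
  · simp only [coe_filter, Set.mem_ofPred_eq] at hσ hσ'
    rw [← Fin.snoc_init_self σ, ← Fin.snoc_init_self σ', hσ.2, hσ'.2]
    exact congrArg _ h

theorem card_tuplesWithIntersections_succ_le (hk : 1 ≤ k) :
    (#(tuplesWithIntersections n (k + 1) ℓ) : ℝ)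
      ≤ #(tuplesWithIntersections n k ℓ) * (n ! * k ^ ℓ (k + 1) / (ℓ (k + 1))!) := by
  have hfiber (τ : Fin k → Equiv.Perm (Fin n)) :
      (#{σ ∈ tuplesWithIntersections n (k + 1) ℓ | Fin.init σ = τ} : ℝ)
        ≤ n ! * k ^ ℓ (k + 1) / (ℓ (k + 1))! := by
    rw [le_div_iff₀ (by positivity), mul_comm]
    have h := factorial_mul_card_perm_graph_meets_le (univ.biUnion fun j => permGraph n (τ j))
      (card_row_biUnion_permGraph_le univ τ) (ℓ (k + 1))
    rw [card_univ, Fintype.card_fin, Fintype.card_fin] at h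
    exact_mod_cast (Nat.mul_le_mul_left _ (card_fiber_init_tuplesWithIntersections_le hk τ)).trans h
  rw [card_eq_sum_card_fiberwise fun σ hσ => init_mem_tuplesWithIntersections hσ]
  push_cast
  exact (sum_le_card_nsmul _ _ _ fun τ _ => hfiber τ).trans_eq (nsmul_eq_mul _ _)

end TuplesWithIntersections

theorem tuple_count_with_intersections_le_general (n k : ℕ) (ℓ : ℕ → ℕ) :
    ((Finset.univ.filter (fun σ : Fin k → Equiv.Perm (Fin n) =>
        ∀ t : Fin k, 1 ≤ t.val →
          (permGraph n (σ t) ∩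
            (Finset.univ.filter (fun j : Fin k => j < t)).biUnion
              (fun j => permGraph n (σ j))).card = ℓ (t.val + 1))).card : ℝ)
      ≤ (Nat.factorial n : ℝ) ^ k *
          ∏ t ∈ Finset.Icc 2 k, ((t : ℝ) - 1) ^ (ℓ t) / (Nat.factorial (ℓ t) : ℝ) := by
  change (#(tuplesWithIntersections n k ℓ) : ℝ) ≤ _
  induction k with
  | zero => simpa using card_le_univ (tuplesWithIntersections n 0 ℓ)
  | succ k ih =>
    obtain rfl | hk := k.eq_zero_or_pos
    · simpa [Fintype.card_perm] using card_le_univ (tuplesWithIntersections n 1 ℓ)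
    · rw [prod_Icc_succ_top (by omega), pow_succ]
      refine (card_tuplesWithIntersections_succ_le hk).trans ?_
      push_cast
      calc _ ≤ _ := mul_le_mul_of_nonneg_right ih (by positivity)
        _ = _ := by rw [add_sub_cancel_right]; ring

/-- For `n ≥ 1`, `k ≥ 2` and nonnegative integers `ℓ_2, …, ℓ_k`, the number `N_L` of
ordered `k`-tuples `(σ_1, …, σ_k)` of permutations of `[n]` such that for every
`2 ≤ t ≤ k` the graph of `σ_t` meets the union of the graphs of `σ_1, …, σ_{t-1}` in
exactly `ℓ_t` edges satisfies `N_L ≤ (n!)^k Π_{t=2}^k (t-1)^{ℓ_t} / ℓ_t!`.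
(Here `σ_t` for `t ∈ {1, …, k}` is represented by `σ ⟨t-1⟩` for `t-1 : Fin k`.) -/
theorem tuple_count_with_intersections_le (n k : ℕ) (hn : 1 ≤ n) (hk : 2 ≤ k)
    (ℓ : ℕ → ℕ) :
    ((Finset.univ.filter (fun σ : Fin k → Equiv.Perm (Fin n) =>
        ∀ t : Fin k, 1 ≤ t.val →
          (permGraph n (σ t) ∩
            (Finset.univ.filter (fun j : Fin k => j < t)).biUnion
              (fun j => permGraph n (σ j))).card = ℓ (t.val + 1))).card : ℝ)
      ≤ (Nat.factorial n : ℝ) ^ k *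
          ∏ t ∈ Finset.Icc 2 k, ((t : ℝ) - 1) ^ (ℓ t) / (Nat.factorial (ℓ t) : ℝ) :=
  tuple_count_with_intersections_le_general n k ℓ
end

section
/- Let (k_n), (a_n), (t_n), (ℓ_n) be sequences of natural numbers with 2 ≤ t_n ≤ k_n, ℓ_n ≤ a_n, k_n² · a_n = o(n) and k_n² = o(n). Set d_n = n − ℓ_n − (t_n − 1) and D_n = n − ℓ_n. Then ( (d_n!)^{1/d_n} / (D_n!)^{1/D_n} )^{n − k_n a_n} · e^{t_n − 1} → 1 as n → ∞; that is, the gain factor ( (d!)^{1/d} / (D!)^{1/D} )^{n−ka} equals (1 + o(1)) e^{−(t−1)}. -/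
/-!
Write `L m = log (m!) / m`, `s = t - 1` and `D = d + s`. The gain factor is
`exp ((n - ka) (L d - L D) + s)`. Since `D! / d!` lies between `d ^ s` and `D ^ s`, and Stirling
gives `L d = log d - 1 + O((1 + log d) / d)`, we get `D (L D - L d) = s + O(s (s + 1 + log d) / d)`.
As `n - ka = D - (ka - ℓ)`, the exponent is `O(s ka / D + s (s + 1 + log d) / d)`, which is
`O((k² a + k² + log² n) / n) = o(1)` once `d ≥ n / 2`.
-/

open Filter Real Topology
open scoped Nat

theorem mul_log_sub_le_log_factorial (n : ℕ) : n * log n - n ≤ log n ! := by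
  rcases eq_or_ne n 0 with rfl | hn
  · simp
  have := Stirling.le_log_factorial_stirling hn
  have : 0 ≤ log n := log_natCast_nonneg n
  have : 0 ≤ log (2 * π) := log_nonneg (by linarith [pi_gt_three])
  linarith

theorem log_factorial_le_stirling {n : ℕ} (hn : n ≠ 0) :
    log n ! ≤ n * log n - n + log n / 2 + 1 := by
  have hmono : log (Stirling.stirlingSeq n) ≤ log (Stirling.stirlingSeq 1) := by
    obtain ⟨m, rfl⟩ := Nat.exists_eq_add_one_of_ne_zero hn
    exact Stirling.log_stirlingSeq'_antitone (Nat.zero_le m)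
  have hn' : (0 : ℝ) < n := by positivity
  rw [Stirling.log_stirlingSeq_formula, Stirling.log_stirlingSeq_formula,
    log_mul two_ne_zero hn'.ne', log_div hn'.ne' (exp_ne_zero 1)] at hmono
  simp only [Nat.factorial_one, Nat.cast_one, log_one, mul_one, one_mul,
    log_div one_ne_zero (exp_ne_zero 1), log_exp] at hmono
  linarith

theorem log_add_sub_log_le {x y : ℝ} (hx : 0 < x) (hy : 0 ≤ y) :
    log (x + y) - log x ≤ y / x := by
  rw [← log_div (by positivity) hx.ne']
  calc log ((x + y) / x) ≤ (x + y) / x - 1 := log_le_sub_one_of_pos (by positivity)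
    _ = y / x := by field_simp; ring

theorem cast_descFactorial_add_self_pos (d s : ℕ) : (0 : ℝ) < (d + s).descFactorial s := by
  exact_mod_cast Nat.descFactorial_pos.mpr (Nat.le_add_left s d)

theorem log_factorial_add (d s : ℕ) :
    log (d + s)! = log d ! + log ((d + s).descFactorial s) := by
  rw [← log_mul (by positivity) (cast_descFactorial_add_self_pos d s).ne', ← Nat.cast_mul,
    ← Nat.factorial_mul_descFactorial (Nat.le_add_left s d), Nat.add_sub_cancel]

theorem abs_mul_log_factorial_div_sub_le {d : ℕ} (hd : d ≠ 0) (s : ℕ) :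
    |((d + s : ℕ) : ℝ) * (log (d + s)! / (d + s : ℕ) - log d ! / d) - s|
      ≤ s * (s + 1 + log d) / d := by
  have hd' : (0 : ℝ) < d := by positivity
  have hs : (0 : ℝ) ≤ s := s.cast_nonneg
  set P := log ((d + s).descFactorial s : ℝ)
  have hP_le : P ≤ s * log (d + s) := by
    rw [← log_pow]
    exact log_le_log (cast_descFactorial_add_self_pos d s)
      (by exact_mod_cast Nat.descFactorial_le_pow (d + s) s)
  have hP_ge : s * log d ≤ P := by
    rw [← log_pow]
    refine log_le_log (by positivity) ?_
    have := Nat.pow_sub_le_descFactorial (d + s) s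
    rw [show d + s + 1 - s = d + 1 by omega] at this
    calc (d : ℝ) ^ s ≤ ((d + 1 : ℕ) : ℝ) ^ s := by gcongr; simp
      _ ≤ _ := by exact_mod_cast this
  have hlog_add : d * (log (d + s) - log d) ≤ s := by
    have := log_add_sub_log_le hd' hs
    rwa [le_div_iff₀ hd', mul_comm] at this
  have hF_ge := mul_log_sub_le_log_factorial d
  have hF_le := log_factorial_le_stirling hd
  have hlog : 0 ≤ log d := log_natCast_nonneg d
  have hexpr : ((d + s : ℕ) : ℝ) * (log (d + s)! / (d + s : ℕ) - log d ! / d) - s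
      = (d * P - s * log d ! - s * d) / d := by
    rw [log_factorial_add]; field_simp; push_cast; ring
  rw [hexpr, abs_le, div_le_div_iff_of_pos_right hd', le_div_iff₀ hd', neg_mul,
    div_mul_cancel₀ _ hd'.ne']
  constructor
  · linarith [mul_le_mul_of_nonneg_left hP_ge hd'.le, mul_le_mul_of_nonneg_left hF_le hs,
      mul_nonneg hs hs, mul_nonneg hs hlog]
  · linarith [mul_le_mul_of_nonneg_left hP_le hd'.le, mul_le_mul_of_nonneg_left hF_ge hs,
      mul_le_mul_of_nonneg_left hlog_add hs, mul_nonneg hs hlog]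

theorem abs_mul_neg_add_div_add_le {x y s E : ℝ} (hx : 0 ≤ x) (hy : 0 ≤ y) (hs : 0 ≤ s)
    (hxy : 0 < x + y) :
    |x * (-(s + E) / (x + y)) + s| ≤ s * y / (x + y) + x / (x + y) * |E| := by
  have hsplit : x * (-(s + E) / (x + y)) + s = s * y / (x + y) - x / (x + y) * E := by
    field_simp; ring
  rw [hsplit]
  refine (abs_sub _ _).trans_eq ?_
  rw [abs_mul (x / _), abs_of_nonneg (by positivity), abs_of_nonneg (by positivity)]

theorem abs_gain_exponent_le {n k a ℓ s : ℕ} (hs : s ≤ k) (hℓ : ℓ ≤ k * a) (hka : k * a ≤ n)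
    (hd : 2 * (ℓ + s) < n) :
    |((n : ℝ) - k * a) * (log (n - ℓ - s)! / (n - ℓ - s : ℕ) - log (n - ℓ)! / (n - ℓ : ℕ)) + s|
      ≤ 2 * (k ^ 2 * a / n) + 4 * (k * (k + 1 + log n) / n) := by
  have hd0 : n - ℓ - s ≠ 0 := by omega
  have hE := abs_mul_log_factorial_div_sub_le hd0 s
  rw [show n - ℓ - s + s = n - ℓ by omega] at hE
  set E := ((n - ℓ : ℕ) : ℝ) * (log (n - ℓ)! / (n - ℓ : ℕ) - log (n - ℓ - s)! / (n - ℓ - s : ℕ))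
    - s
  have hn : (0 : ℝ) < n := by exact_mod_cast (show 0 < n by omega)
  have hdn : (n : ℝ) ≤ 2 * (n - ℓ - s : ℕ) := by
    exact_mod_cast (show n ≤ 2 * (n - ℓ - s) by omega)
  have hDxy : ((n - ℓ : ℕ) : ℝ) = (n - k * a) + (k * a - ℓ) := by
    rw [Nat.cast_sub (by omega)]; ring
  have hx : (0 : ℝ) ≤ n - k * a := sub_nonneg.mpr (by exact_mod_cast hka)
  have hy : (0 : ℝ) ≤ k * a - ℓ := sub_nonneg.mpr (by exact_mod_cast hℓ)
  have hD : (n : ℝ) / 2 ≤ n - k * a + (k * a - ℓ) := by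
    rw [← hDxy, div_le_iff₀ two_pos]; exact_mod_cast (show n ≤ (n - ℓ) * 2 by omega)
  have hDpos : 0 < (n : ℝ) - k * a + (k * a - ℓ) := by linarith
  have hLdiff : log (n - ℓ - s)! / (n - ℓ - s : ℕ) - log (n - ℓ)! / (n - ℓ : ℕ)
      = -(s + E) / (n - k * a + (k * a - ℓ)) := by
    have hd0' : ((n - ℓ - s : ℕ) : ℝ) ≠ 0 := by positivity
    have hD0 : ((n - ℓ : ℕ) : ℝ) ≠ 0 := by rw [hDxy]; exact hDpos.ne'
    rw [← hDxy]; simp only [E]; field_simp; ring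
  rw [hLdiff]
  refine (abs_mul_neg_add_div_add_le hx hy s.cast_nonneg hDpos).trans (add_le_add ?_ ?_)
  · have hs' : (s : ℝ) ≤ k := by exact_mod_cast hs
    rw [div_le_iff₀ hDpos]
    calc (s : ℝ) * (k * a - ℓ) ≤ k * (k * a) :=
          mul_le_mul hs' (by linarith [ℓ.cast_nonneg (α := ℝ)]) hy k.cast_nonneg
      _ = 2 * (k ^ 2 * a / n) * (n / 2) := by field_simp
      _ ≤ _ := by gcongr
  · have hlogd : log (n - ℓ - s : ℕ) ≤ log n :=
      log_le_log (by positivity) (by exact_mod_cast Nat.sub_le _ _ |>.trans (Nat.sub_le _ _))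
    have hxD : (n - k * a : ℝ) / (n - k * a + (k * a - ℓ)) ≤ 2 := by
      rw [div_le_iff₀ hDpos]; linarith
    calc (n - k * a : ℝ) / (n - k * a + (k * a - ℓ)) * |E|
        ≤ 2 * (s * (s + 1 + log (n - ℓ - s : ℕ)) / (n - ℓ - s : ℕ)) := by gcongr
      _ ≤ 2 * (k * (k + 1 + log n) / (n / 2)) := by
          have := log_natCast_nonneg n
          gcongr
          linarith
      _ = 4 * (k * (k + 1 + log n) / n) := by field_simp; ring

theorem factorial_rpow_one_div (m : ℕ) : (m ! : ℝ) ^ ((1 : ℝ) / m) = exp (log m ! / m) := by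
  rw [rpow_def_of_pos (by positivity), mul_one_div]

theorem factorial_root_div_rpow_mul_exp (d D : ℕ) (x c : ℝ) :
    ((d ! : ℝ) ^ ((1 : ℝ) / d) / (D ! : ℝ) ^ ((1 : ℝ) / D)) ^ x * exp c
      = exp (x * (log d ! / d - log D ! / D) + c) := by
  rw [factorial_rpow_one_div, factorial_rpow_one_div, ← exp_sub, ← exp_mul, ← exp_add, mul_comm]

theorem eventually_mul_lt_of_isLittleO {f : ℕ → ℝ} (hf : f =o[atTop] (fun n => (n : ℝ)))
    (c : ℝ) : ∀ᶠ n : ℕ in atTop, c * f n < n := by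
  filter_upwards [(hf.tendsto_div_nhds_zero.const_mul c).eventually_lt_const
    (by simp : c * 0 < 1), eventually_gt_atTop 0] with n h hn
  rwa [← mul_div_assoc, div_lt_one (by exact_mod_cast hn)] at h

theorem tendsto_log_sq_div_natCast_atTop :
    Tendsto (fun n : ℕ => log n ^ 2 / n) atTop (𝓝 0) := by
  have := (tendsto_pow_log_div_mul_add_atTop 1 0 2 one_ne_zero).comp tendsto_natCast_atTop_atTop
  simpa [Function.comp_def] using this

theorem tendsto_mul_add_log_div_of_isLittleO {k : ℕ → ℕ}
    (hk : (fun n => (k n : ℝ) ^ 2) =o[atTop] (fun n => (n : ℝ))) :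
    Tendsto (fun n : ℕ => k n * (k n + 1 + log n) / n) atTop (𝓝 0) := by
  have hB := (hk.tendsto_div_nhds_zero.const_mul 3).add tendsto_log_sq_div_natCast_atTop
  rw [mul_zero, zero_add] at hB
  refine squeeze_zero (fun n => by have := log_natCast_nonneg n; positivity) (fun n => ?_) hB
  have hk1 : (k n : ℝ) ≤ k n ^ 2 := by
    rcases Nat.eq_zero_or_pos (k n) with h | h
    · simp [h]
    · nlinarith [(by exact_mod_cast h : (1 : ℝ) ≤ k n)]
  rw [← mul_div_assoc, ← add_div]
  gcongr
  nlinarith [sq_nonneg ((k n : ℝ) - log n)]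

/-- Let `(k_n), (a_n), (t_n), (ℓ_n)` be natural sequences with `2 ≤ t_n ≤ k_n`,
`ℓ_n ≤ a_n`, `k_n² a_n = o(n)` and `k_n² = o(n)`. Setting `d_n = n - ℓ_n - (t_n - 1)`
and `D_n = n - ℓ_n`, the gain factor satisfies
`((d_n!)^{1/d_n} / (D_n!)^{1/D_n})^{n - k_n a_n} = (1 + o(1)) e^{-(t_n - 1)}`,
i.e. multiplied by `e^{t_n - 1}` it tends to `1`. -/
theorem gain_factor_asymptotic (k a t ℓ : ℕ → ℕ)
    (ht2 : ∀ n, 2 ≤ t n) (htk : ∀ n, t n ≤ k n) (hℓa : ∀ n, ℓ n ≤ a n)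
    (hka : (fun n : ℕ => ((k n : ℝ)) ^ 2 * (a n : ℝ)) =o[atTop] (fun n : ℕ => (n : ℝ)))
    (hk2 : (fun n : ℕ => ((k n : ℝ)) ^ 2) =o[atTop] (fun n : ℕ => (n : ℝ))) :
    Tendsto (fun n : ℕ =>
        (((Nat.factorial (n - ℓ n - (t n - 1)) : ℝ)
              ^ ((1 : ℝ) / ((n - ℓ n - (t n - 1) : ℕ) : ℝ)) /
            (Nat.factorial (n - ℓ n) : ℝ) ^ ((1 : ℝ) / ((n - ℓ n : ℕ) : ℝ)))
          ^ ((n : ℝ) - (k n : ℝ) * (a n : ℝ)))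
        * Real.exp ((t n : ℝ) - 1))
      atTop (nhds 1) := by
  set g : ℕ → ℝ := fun n => ((n : ℝ) - k n * a n) * (log (n - ℓ n - (t n - 1))! /
    (n - ℓ n - (t n - 1) : ℕ) - log (n - ℓ n)! / (n - ℓ n : ℕ)) + (t n - 1 : ℕ)
  have hbound : ∀ᶠ n in atTop,
      ‖g n‖ ≤ 2 * (k n ^ 2 * a n / n) + 4 * (k n * (k n + 1 + log n) / n) := by
    filter_upwards [eventually_mul_lt_of_isLittleO hka 4, eventually_mul_lt_of_isLittleO hk2 4]
      with n h1 h2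
    replace h1 : 4 * (k n ^ 2 * a n) < n := by exact_mod_cast h1
    replace h2 : 4 * k n ^ 2 < n := by exact_mod_cast h2
    have hs := htk n
    have hk : 2 ≤ k n := (ht2 n).trans hs
    have hka_le : 2 * (k n * a n) ≤ k n ^ 2 * a n := by
      rw [sq, mul_assoc]; exact Nat.mul_le_mul_right _ hk
    have hk_le : 2 * k n ≤ k n ^ 2 := by rw [sq]; exact Nat.mul_le_mul_right _ hk
    have hℓ : ℓ n ≤ k n * a n := (hℓa n).trans (Nat.le_mul_of_pos_left _ (by omega))
    exact abs_gain_exponent_le (by omega) hℓ (by omega) (by omega)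
  have hB := (hka.tendsto_div_nhds_zero.const_mul 2).add
    ((tendsto_mul_add_log_div_of_isLittleO hk2).const_mul 4)
  rw [mul_zero, mul_zero, add_zero] at hB
  have hg := exp_zero ▸ (continuous_exp.tendsto 0).comp (squeeze_zero_norm' hbound hB)
  refine hg.congr fun n => ?_
  rw [Function.comp_apply, factorial_root_div_rpow_mul_exp,
    ← Nat.cast_pred (by linarith [ht2 n] : 0 < t n)]
end

section
/- (Bregman–Minc inequality) Let G be a bipartite graph with color classes V = {v_1,…,v_n} and W = {w_1,…,w_n}, in which every vertex v_i has degree d(v_i) ≥ 1. Then the number M of perfect matchings of G satisfies M ≤ Π_{i=1}^n ( d(v_i)! )^{1/d(v_i)}. Equivalently, for an n×n matrix A with entries in {0,1} whose row sums r_1,…,r_n are all positive, perm(A) ≤ Π_{i=1}^n (r_i!)^{1/r_i}. -/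
/-!
Schrijver's proof. Let `p` be the number of perfect matchings, `d i` the degree of `v i`, and
`p i k` the number of perfect matchings containing the edge `v i w k`; it is the number of perfect
matchings of the graph with `v i` and `w k` deleted. Since `∑ k, p i k = p`, convexity of
`x ↦ x log x` gives `p ^ p ≤ d i ^ p * ∏ k, p i k ^ p i k = d i ^ p * ∏ σ, p i (σ i)`, the last
product running over perfect matchings `σ`. Multiplying over `i` and bounding each `p i (σ i)` by
induction, the exponents are, for a fixed `σ` and vertex `v j`, counts of the `i ≠ j` with `v j`
adjacent to `w (σ i)`: exactly `d j - 1` of them, since `σ` is a bijection. Hence everything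
collapses to `p ^ (n * p) ≤ (∏ j, (d j)! ^ (1 / d j)) ^ (n * p)`.
-/

open Finset Real

theorem sum_mul_log_sum_le {ι : Type*} (s : Finset ι) (hs : s.Nonempty) (t : ι → ℝ)
    (ht : ∀ i ∈ s, 0 ≤ t i) :
    (∑ i ∈ s, t i) * log (∑ i ∈ s, t i) ≤
      (∑ i ∈ s, t i) * log #s + ∑ i ∈ s, t i * log (t i) := by
  have hm : (0 : ℝ) < #s := by exact_mod_cast hs.card_pos
  have jensen := convexOn_mul_log.map_sum_le (t := s) (w := fun _ => (#s : ℝ)⁻¹) (p := t)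
    (fun _ _ => by positivity) (by simp [hm.ne']) ht
  simp only [smul_eq_mul, ← mul_sum] at jensen
  set T := ∑ i ∈ s, t i
  have hlog : T * log (T / #s) = T * log T - T * log #s := by
    rcases eq_or_ne T 0 with hT | hT
    · simp [hT]
    · rw [log_div hT hm.ne', mul_sub]
  have key : T * log (T / #s) ≤ ∑ i ∈ s, t i * log (t i) := calc
    T * log (T / #s) = #s * ((#s : ℝ)⁻¹ * T * log ((#s : ℝ)⁻¹ * T)) := by field_simp
    _ ≤ #s * ((#s : ℝ)⁻¹ * ∑ i ∈ s, t i * log (t i)) := mul_le_mul_of_nonneg_left jensen hm.le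
    _ = ∑ i ∈ s, t i * log (t i) := mul_inv_cancel_left₀ hm.ne' _
  linarith

theorem sum_pow_sum_le_card_pow_mul_prod_pow_self {κ : Type*} (F : Finset κ) (hF : F.Nonempty)
    (c : κ → ℕ) :
    ((∑ b ∈ F, c b : ℕ) : ℝ) ^ (∑ b ∈ F, c b) ≤
      (#F : ℝ) ^ (∑ b ∈ F, c b) * ∏ b ∈ F, (c b : ℝ) ^ c b := by
  have self_pow_pos (m : ℕ) : (0 : ℝ) < (m : ℝ) ^ m := by
    rcases m.eq_zero_or_pos with rfl | hm
    · simp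
    · exact pow_pos (Nat.cast_pos.mpr hm) m
  have hprod : (0 : ℝ) < ∏ b ∈ F, (c b : ℝ) ^ c b := prod_pos fun b _ => self_pow_pos (c b)
  rw [← log_le_log_iff (self_pow_pos _) (mul_pos (by positivity) hprod),
    log_mul (by positivity) hprod.ne', log_prod fun b _ => (self_pow_pos (c b)).ne']
  simp only [log_pow, Nat.cast_sum]
  exact sum_mul_log_sum_le F hF _ fun b _ => Nat.cast_nonneg (c b)

theorem card_pow_card_le_card_image_pow_mul_prod_card_fiber {ι κ : Type*} [DecidableEq κ]
    (s : Finset ι) (f : ι → κ) :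
    (#s : ℝ) ^ #s ≤ (#(s.image f) : ℝ) ^ #s * ∏ x ∈ s, (#{y ∈ s | f y = f x} : ℝ) := by
  rcases s.eq_empty_or_nonempty with rfl | hs
  · simp
  rw [prod_comp (fun b => (#{y ∈ s | f y = b} : ℝ)) f, card_eq_sum_card_image f s]
  exact sum_pow_sum_le_card_pow_mul_prod_pow_self _ (hs.image f) _

noncomputable def bregmanFactor (m : ℕ) : ℝ := (Nat.factorial m : ℝ) ^ ((1 : ℝ) / (m : ℝ))

theorem bregmanFactor_pos (m : ℕ) : 0 < bregmanFactor m :=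
  rpow_pos_of_pos (Nat.cast_pos.mpr m.factorial_pos) _

theorem bregmanFactor_pow_self (m : ℕ) : bregmanFactor m ^ m = m.factorial := by
  rcases m.eq_zero_or_pos with rfl | hm
  · simp
  rw [bregmanFactor, ← rpow_natCast, ← rpow_mul (Nat.cast_nonneg _),
    one_div_mul_cancel (Nat.cast_ne_zero.mpr hm.ne'), rpow_one]

theorem mul_bregmanFactor_pred_pow {m : ℕ} (hm : 0 < m) :
    m * bregmanFactor (m - 1) ^ (m - 1) = m.factorial := by
  rw [bregmanFactor_pow_self, ← Nat.cast_mul, Nat.mul_factorial_pred hm.ne']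

namespace Bipartite

section Degree

variable {α β : Type*} [Fintype β] (r : α → β → Prop) [DecidableRel r]

def degree (i : α) : ℕ := #{j | r i j}

variable {r}

theorem degree_le_card (i : α) : degree r i ≤ Fintype.card β := card_filter_le _ _

theorem card_filter_subtype_ne [DecidableEq β] (i : α) (k : β) :
    #{y : {y // y ≠ k} | r i y} = degree r i - if r i k then 1 else 0 := by
  have : ({y : {y // y ≠ k} | r i y} : Finset _) = ({y | r i y} : Finset β).subtype (· ≠ k) := by
    ext; simp
  rw [this, card_subtype, filter_ne', card_erase_eq_ite]
  split_ifs <;> simp_all [degree]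

end Degree

variable {α β : Type*} [Fintype α] [Fintype β] [DecidableEq α] [DecidableEq β]
  (r : α → β → Prop) [DecidableRel r]

def perfectMatchings : Finset (α ≃ β) := {σ | ∀ i, r i (σ i)}

variable {r}

@[simp]
theorem mem_perfectMatchings {σ : α ≃ β} : σ ∈ perfectMatchings r ↔ ∀ i, r i (σ i) := by
  simp [perfectMatchings]

theorem degree_pos {σ : α ≃ β} (hσ : σ ∈ perfectMatchings r) (i : α) : 0 < degree r i :=
  card_pos.mpr ⟨σ i, by simpa using mem_perfectMatchings.mp hσ i⟩

theorem card_filter_erase_apply {σ : α ≃ β} (hσ : σ ∈ perfectMatchings r) (j : α) :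
    #{i ∈ univ.erase j | r j (σ i)} = degree r j - 1 := by
  rw [filter_erase, card_erase_of_mem (by simpa using mem_perfectMatchings.mp hσ j)]
  congr 1
  exact card_equiv σ (by simp)

theorem card_filter_apply_eq_card_perfectMatchings_subtype {i : α} {k : β} (h : r i k) :
    #{σ ∈ perfectMatchings r | σ i = k} =
      #(perfectMatchings fun (x : {x // x ≠ i}) (y : {y // y ≠ k}) => r x y) := by
  let extend (τ : {x // x ≠ i} ≃ {y // y ≠ k}) : α ≃ β :=
    ((Equiv.optionSubtypeNe i).symm.trans τ.optionCongr).trans (Equiv.optionSubtypeNe k)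
  have extend_apply_self τ : extend τ i = k := by simp [extend]
  have extend_apply_of_ne τ x (hx : x ≠ i) : extend τ x = τ ⟨x, hx⟩ := by
    simp [extend, Equiv.optionSubtypeNe_symm_of_ne hx]
  refine card_bij' (fun σ hσ => σ.subtypeEquiv fun x => ?_) (fun τ _ => extend τ) ?_ ?_ ?_ ?_
  · rw [← (mem_filter.mp hσ).2, σ.injective.ne_iff]
  · intro σ hσ
    simp only [mem_filter, mem_perfectMatchings] at hσ ⊢
    exact fun x => hσ.1 x
  · intro τ hτ
    simp only [mem_filter, mem_perfectMatchings] at hτ ⊢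
    refine ⟨fun x => ?_, extend_apply_self τ⟩
    rcases eq_or_ne x i with rfl | hx
    · rwa [extend_apply_self]
    · rw [extend_apply_of_ne τ x hx]; exact hτ ⟨x, hx⟩
  · intro σ hσ
    ext x
    rcases eq_or_ne x i with rfl | hx
    · rw [extend_apply_self, (mem_filter.mp hσ).2]
    · rw [extend_apply_of_ne _ x hx]; rfl
  · intro τ _
    ext x
    simp [extend_apply_of_ne τ x x.2]

theorem degree_mul_prod_erase_eq {σ : α ≃ β} (hσ : σ ∈ perfectMatchings r) (j : α) :
    degree r j * ∏ i ∈ univ.erase j, bregmanFactor (degree r j - if r j (σ i) then 1 else 0) =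
      bregmanFactor (degree r j) ^ Fintype.card α := by
  have hd := degree_pos hσ j
  have hdn : degree r j ≤ Fintype.card α := (Fintype.card_congr σ).symm ▸ degree_le_card j
  have hsplit := card_filter_add_card_filter_not (s := univ.erase j) (p := fun i => r j (σ i))
  rw [card_filter_erase_apply hσ, card_erase_of_mem (mem_univ j), card_univ] at hsplit
  have hfactor (i : α) : bregmanFactor (degree r j - if r j (σ i) then 1 else 0) =
      if r j (σ i) then bregmanFactor (degree r j - 1) else bregmanFactor (degree r j) := by
    split_ifs <;> rfl
  rw [prod_congr rfl fun i _ => hfactor i, prod_ite, prod_const, prod_const,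
    card_filter_erase_apply hσ, ← mul_assoc, mul_bregmanFactor_pred_pow hd,
    ← bregmanFactor_pow_self, ← pow_add]
  congr 1
  omega

theorem prod_degree_mul_prod_erase_eq {σ : α ≃ β} (hσ : σ ∈ perfectMatchings r) :
    ∏ i, (degree r i *
        ∏ j ∈ univ.erase i, bregmanFactor (degree r j - if r j (σ i) then 1 else 0)) =
      ∏ j, bregmanFactor (degree r j) ^ Fintype.card α := by
  rw [prod_mul_distrib, prod_comm' (t' := univ) (s' := fun j => univ.erase j) (by simp [ne_comm]),
    ← prod_mul_distrib]
  exact prod_congr rfl fun j _ => degree_mul_prod_erase_eq hσ j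

theorem card_pow_le_prod_degree_mul_card_filter :
    (#(perfectMatchings r) : ℝ) ^ (Fintype.card α * #(perfectMatchings r)) ≤
      ∏ σ ∈ perfectMatchings r, ∏ i,
        (degree r i * #{τ ∈ perfectMatchings r | τ i = σ i} : ℝ) := by
  set S := perfectMatchings r
  have himage (i : α) : #(S.image (· i)) ≤ degree r i :=
    card_le_card fun k hk => by
      obtain ⟨σ, hσ, rfl⟩ := mem_image.mp hk
      simpa using mem_perfectMatchings.mp hσ i
  calc (#S : ℝ) ^ (Fintype.card α * #S) = ∏ _i : α, (#S : ℝ) ^ #S := by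
        rw [prod_const, card_univ, ← pow_mul, mul_comm]
    _ ≤ ∏ i, ((degree r i : ℝ) ^ #S * ∏ σ ∈ S, (#{τ ∈ S | τ i = σ i} : ℝ)) := by
        refine prod_le_prod (fun _ _ => by positivity) fun i _ => ?_
        refine (card_pow_card_le_card_image_pow_mul_prod_card_fiber S (· i)).trans ?_
        gcongr
        exact himage i
    _ = ∏ i, ∏ σ ∈ S, (degree r i * #{τ ∈ S | τ i = σ i} : ℝ) := by
        simp_rw [prod_mul_distrib, prod_const]
    _ = _ := prod_comm

variable (r) in
theorem card_perfectMatchings_le :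
    (#(perfectMatchings r) : ℝ) ≤ ∏ i, bregmanFactor (degree r i) := by
  induction hn : Fintype.card α using Nat.strong_induction_on generalizing α β with
  | _ n ih =>
  set S := perfectMatchings r
  rcases S.eq_empty_or_nonempty with hS | ⟨σ₀, hσ₀⟩
  · rw [hS, card_empty, Nat.cast_zero]
    exact (prod_pos fun i _ => bregmanFactor_pos _).le
  rcases n.eq_zero_or_pos with rfl | hn_pos
  · have : IsEmpty α := Fintype.card_eq_zero_iff.mp hn
    rw [univ_eq_empty, prod_empty, Nat.cast_le_one]
    exact card_le_one.mpr fun σ _ τ _ => Equiv.ext isEmptyElim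
  have hminor (i : α) (k : β) (hik : r i k) : (#{τ ∈ S | τ i = k} : ℝ) ≤
      ∏ j ∈ univ.erase i, bregmanFactor (degree r j - if r j k then 1 else 0) := by
    have hcard : Fintype.card {x // x ≠ i} = n - 1 := by
      rw [Fintype.card_subtype_compl, hn, Fintype.card_subtype_eq]
    rw [card_filter_apply_eq_card_perfectMatchings_subtype hik,
      prod_subtype (p := (· ≠ i)) (univ.erase i) (by simp)]
    refine (ih (n - 1) (by omega) _ hcard).trans_eq (prod_congr rfl fun x _ => ?_)
    exact congrArg _ (card_filter_subtype_ne (x : α) k)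
  have key : (#S : ℝ) ^ (n * #S) ≤ (∏ i, bregmanFactor (degree r i)) ^ (n * #S) := calc
    (#S : ℝ) ^ (n * #S) ≤ ∏ σ ∈ S, ∏ i, (degree r i * #{τ ∈ S | τ i = σ i} : ℝ) :=
      hn ▸ card_pow_le_prod_degree_mul_card_filter
    _ ≤ ∏ σ ∈ S, ∏ i, (degree r i *
        ∏ j ∈ univ.erase i, bregmanFactor (degree r j - if r j (σ i) then 1 else 0)) := by
      refine prod_le_prod (fun _ _ => prod_nonneg fun _ _ => by positivity) fun σ hσ => ?_
      refine prod_le_prod (fun _ _ => by positivity) fun i _ => ?_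
      exact mul_le_mul_of_nonneg_left (hminor i (σ i) (mem_perfectMatchings.mp hσ i))
        (Nat.cast_nonneg _)
    _ = ∏ σ ∈ S, ∏ j, bregmanFactor (degree r j) ^ n :=
      prod_congr rfl fun σ hσ => hn ▸ prod_degree_mul_prod_erase_eq hσ
    _ = (∏ i, bregmanFactor (degree r i)) ^ (n * #S) := by
      rw [prod_const, prod_pow, pow_mul]
  exact le_of_pow_le_pow_left₀ (mul_pos hn_pos (card_pos.mpr ⟨σ₀, hσ₀⟩)).ne'
    (prod_pos fun i _ => bregmanFactor_pos _).le key

end Bipartite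

theorem bregman_minc_general (n : ℕ) (A : Fin n → Fin n → Bool)
    (d : Fin n → ℕ)
    (hd : ∀ i, d i = (Finset.univ.filter (fun j => A i j = true)).card) :
    (((Finset.univ.filter
        (fun σ : Equiv.Perm (Fin n) => ∀ i, A i (σ i) = true)).card : ℝ))
      ≤ ∏ i : Fin n, (Nat.factorial (d i) : ℝ) ^ ((1 : ℝ) / (d i : ℝ)) := by
  obtain rfl : d = Bipartite.degree (fun i j => A i j = true) := funext hd
  convert Bipartite.card_perfectMatchings_le (fun i j => A i j = true) using 3
  · ext σ
    simp
  · rfl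

/-- **Bregman–Minc inequality.** Let `G` be a bipartite graph on color classes
`V = W = [n]`, given by its 0–1 biadjacency matrix `A` (here `A i j = true` iff
`v_i w_j` is an edge), in which every vertex `v_i` of `V` has degree
`d i = #{j : A i j} ≥ 1`. Then the number of perfect matchings (equivalently, the
permanent of the biadjacency matrix) satisfies `M ≤ Π_i (d i !)^(1 / d i)`. -/
theorem bregman_minc (n : ℕ) (A : Fin n → Fin n → Bool)
    (d : Fin n → ℕ)
    (hd : ∀ i, d i = (Finset.univ.filter (fun j => A i j = true)).card)
    (hd1 : ∀ i, 1 ≤ d i) :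
    (((Finset.univ.filter
        (fun σ : Equiv.Perm (Fin n) => ∀ i, A i (σ i) = true)).card : ℝ))
      ≤ ∏ i : Fin n, (Nat.factorial (d i) : ℝ) ^ ((1 : ℝ) / (d i : ℝ)) :=
  bregman_minc_general n A d hd
end
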